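/- Ward's linkage is weak-reducible: for nonempty pairwise disjoint finite clusters A, B, C ⊆ ℝ^k with d_Ward(A, B) ≥ max(d_Ward(A, C), d_Ward(B, C)), we have d_Ward(A ∪ C, B) ≥ d_Ward(B, C) and d_Ward(B ∪ C, A) ≥ d_Ward(A, C). -/

import Mathlib

open scoped Classical

noncomputable def centroid {k : ℕ} (A : Finset (EuclideanSpace ℝ (Fin k))) :
    EuclideanSpace ℝ (Fin k) :=
  (A.card : ℝ)⁻¹ • ∑ a ∈ A, a

noncomputable def dWard {k : ℕ} (X Y : Finset (EuclideanSpace ℝ (Fin k))) : ℝ :=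
  ((X.card : ℝ) * Y.card / (X.card + Y.card)) * ‖centroid X - centroid Y‖ ^ 2

/-!
Ward's linkage satisfies the Lance–Williams update formula: with `a, b, c` the sizes of the
clusters,
  `(a + b + c) d(A ∪ C, B) = (a + b) d(A, B) + (c + b) d(C, B) - b d(A, C)`,
which, after multiplying by `a + c`, is the parallel-axis identity
`‖a u + c v‖² = (a + c)(a‖u‖² + c‖v‖²) - a c ‖u - v‖²` for `u, v` the centroids of `A` and `C`
seen from that of `B`. If `d(A, B)` dominates `d(A, C)` and `d(B, C)`, the right-hand side is
at least `(a + b) d(A, B) - b d(A, B) + (c + b) d(B, C) ≥ (a + b + c) d(B, C)`.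
The second claim is the first with `A` and `B` exchanged.
-/

theorem norm_smul_add_smul_sq {E : Type*} [NormedAddCommGroup E] [InnerProductSpace ℝ E]
    (a c : ℝ) (u v : E) :
    ‖a • u + c • v‖ ^ 2 = (a + c) * (a * ‖u‖ ^ 2 + c * ‖v‖ ^ 2) - a * c * ‖u - v‖ ^ 2 := by
  rw [norm_add_sq_real, norm_sub_sq_real, norm_smul, norm_smul, real_inner_smul_left,
    real_inner_smul_right, mul_pow, mul_pow, Real.norm_eq_abs, Real.norm_eq_abs, sq_abs, sq_abs]
  ring

section

variable {k : ℕ} (A B C : Finset (EuclideanSpace ℝ (Fin k)))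

theorem card_smul_centroid : (A.card : ℝ) • centroid A = ∑ a ∈ A, a := by
  rcases A.eq_empty_or_nonempty with rfl | hA
  · simp
  · rw [centroid, smul_inv_smul₀ (by simpa using hA.ne_empty)]

theorem card_union_smul_centroid_union (hAC : Disjoint A C) :
    ((A.card : ℝ) + C.card) • centroid (A ∪ C) =
      (A.card : ℝ) • centroid A + (C.card : ℝ) • centroid C := by
  rw [← Nat.cast_add, ← Finset.card_union_of_disjoint hAC, card_smul_centroid,
    card_smul_centroid, card_smul_centroid, Finset.sum_union hAC]

theorem dWard_comm : dWard A B = dWard B A := by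
  rw [dWard, dWard, norm_sub_rev, mul_comm (A.card : ℝ), add_comm (A.card : ℝ)]

theorem card_add_card_mul_dWard :
    ((A.card : ℝ) + B.card) * dWard A B = A.card * B.card * ‖centroid A - centroid B‖ ^ 2 := by
  rcases eq_or_ne ((A.card : ℝ) + B.card) 0 with h | h
  · have hA : (A.card : ℝ) = 0 := by
      linarith [A.card.cast_nonneg (α := ℝ), B.card.cast_nonneg (α := ℝ)]
    rw [h, hA, zero_mul, zero_mul, zero_mul]
  · rw [dWard, ← mul_assoc, mul_div_cancel₀ _ h]

theorem dWard_empty_left : dWard ∅ B = 0 := by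
  simp [dWard]

theorem card_mul_dWard_union (hAC : Disjoint A C) :
    ((A.card : ℝ) + B.card + C.card) * dWard (A ∪ C) B =
      (A.card + B.card) * dWard A B + (C.card + B.card) * dWard C B
        - B.card * dWard A C := by
  rcases (A ∪ C).eq_empty_or_nonempty with hE | hne
  · obtain ⟨rfl, rfl⟩ := Finset.union_eq_empty.mp hE
    simp [dWard_empty_left]
  have hs : (0 : ℝ) < A.card + C.card := by
    rw [← Nat.cast_add, ← Finset.card_union_of_disjoint hAC]
    exact_mod_cast hne.card_pos
  have hunion := card_add_card_mul_dWard (A ∪ C) B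
  rw [Finset.card_union_of_disjoint hAC, Nat.cast_add] at hunion
  have hsplit :
      ((A.card : ℝ) + C.card) • centroid (A ∪ C) - ((A.card : ℝ) + C.card) • centroid B =
        (A.card : ℝ) • (centroid A - centroid B) + (C.card : ℝ) • (centroid C - centroid B) := by
    rw [card_union_smul_centroid_union A C hAC, smul_sub, smul_sub, add_smul]
    abel
  have key := congrArg (‖·‖ ^ 2) hsplit
  simp only [← smul_sub, norm_smul, mul_pow, Real.norm_eq_abs, sq_abs, norm_smul_add_smul_sq,
    sub_sub_sub_cancel_right] at key
  apply mul_left_cancel₀ hs.ne'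
  linear_combination (A.card + C.card : ℝ) * hunion + (B.card : ℝ) * key
    - (A.card + C.card : ℝ) * card_add_card_mul_dWard A B
    - (A.card + C.card : ℝ) * card_add_card_mul_dWard C B
    + (B.card : ℝ) * card_add_card_mul_dWard A C

theorem dWard_le_dWard_union (hB : B.Nonempty) (hAC : Disjoint A C)
    (hAC_le : dWard A C ≤ dWard A B) (hBC_le : dWard B C ≤ dWard A B) :
    dWard B C ≤ dWard (A ∪ C) B := by
  have hb : (0 : ℝ) < B.card := by exact_mod_cast hB.card_pos
  have hpos : (0 : ℝ) < A.card + B.card + C.card := by positivity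
  refine le_of_mul_le_mul_left ?_ hpos
  rw [card_mul_dWard_union A B C hAC, dWard_comm C B]
  linear_combination mul_le_mul_of_nonneg_left hAC_le hb.le
    + mul_le_mul_of_nonneg_left hBC_le (A.card.cast_nonneg (α := ℝ))

end

theorem ward_weak_reducible_general {k : ℕ} (A B C : Finset (EuclideanSpace ℝ (Fin k)))
    (hA : A.Nonempty) (hB : B.Nonempty)
    (hAC : Disjoint A C) (hBC : Disjoint B C)
    (hmax : dWard A B ≥ max (dWard A C) (dWard B C)) :
    dWard (A ∪ C) B ≥ dWard B C ∧ dWard (B ∪ C) A ≥ dWard A C := by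
  obtain ⟨hAC_le, hBC_le⟩ := max_le_iff.mp hmax
  refine ⟨dWard_le_dWard_union A B C hB hAC hAC_le hBC_le, ?_⟩
  rw [dWard_comm A B] at hAC_le hBC_le
  exact dWard_le_dWard_union B A C hA hBC hBC_le hAC_le

theorem ward_weak_reducible {k : ℕ} (A B C : Finset (EuclideanSpace ℝ (Fin k)))
    (hA : A.Nonempty) (hB : B.Nonempty) (hC : C.Nonempty)
    (hAB : Disjoint A B) (hAC : Disjoint A C) (hBC : Disjoint B C)
    (hmax : dWard A B ≥ max (dWard A C) (dWard B C)) :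
    dWard (A ∪ C) B ≥ dWard B C ∧ dWard (B ∪ C) A ≥ dWard A C :=
  ward_weak_reducible_general A B C hA hB hAC hBC hmax
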